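/- For every positive integer n, exactly 2 elements of the quaternion ring H(ℤ_{2^n}) can be written as a product of idempotents. -/

import Mathlib

/-!
A quaternion `e` satisfies `e² = tr(e) • e - N(e)` with `tr(e) = 2 re(e)`. If `e` is idempotent this
makes `(1 - tr e) • e` a scalar, and over `ℤ/2ⁿ`, a local ring in which `2` is not a unit,
`1 - tr e` is a unit; so `e` is itself a scalar idempotent of `ℤ/2ⁿ`, that is `0` or `1`.
Hence the products of idempotents are exactly `0` and `1`.
-/

open Quaternion

theorem IsLocalRing.eq_zero_or_one_of_isIdempotentElem {R : Type*} [CommRing R] [IsLocalRing R]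
    {e : R} (he : IsIdempotentElem e) : e = 0 ∨ e = 1 := by
  rcases isUnit_or_isUnit_one_sub_self e with hu | hu
  · exact .inr ((IsIdempotentElem.iff_eq_one_of_isUnit hu).mp he)
  · exact .inl (by simpa using (IsIdempotentElem.iff_eq_one_of_isUnit hu).mp he.one_sub)

theorem ZMod.isLocalRing_prime_pow {p n : ℕ} (hp : p.Prime) (hn : n ≠ 0) :
    IsLocalRing (ZMod (p ^ n)) := by
  have : Fact (1 < p ^ n) := ⟨Nat.one_lt_pow hn hp.one_lt⟩
  refine .of_isUnit_or_isUnit_one_sub_self fun a => ?_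
  rw [← ZMod.natCast_zmod_val a]
  by_cases hpa : p ∣ a.val
  · obtain ⟨k, hk⟩ := hpa
    have hnil : IsNilpotent ((a.val : ℕ) : ZMod (p ^ n)) :=
      ⟨n, by rw [hk, Nat.cast_mul, mul_pow, ← Nat.cast_pow, ZMod.natCast_self, zero_mul]⟩
    exact .inr hnil.isUnit_one_sub
  · exact .inl ((ZMod.isUnit_iff_coprime _ _).mpr
      ((hp.coprime_iff_not_dvd.mpr hpa).symm.pow_right n))

namespace QuaternionAlgebra

variable {R : Type*} [CommRing R] {c₁ c₂ c₃ : R}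

theorem exists_eq_coe_of_isIdempotentElem {e : ℍ[R,c₁,c₂,c₃]} (he : IsIdempotentElem e)
    (hu : IsUnit (1 - (2 * e.re + c₂ * e.imI))) : ∃ r : R, e = r := by
  obtain ⟨u, hu⟩ := hu
  set t := 2 * e.re + c₂ * e.imI
  have hquad : e * e = t • e - ((e * star e).re : ℍ[R,c₁,c₂,c₃]) := by
    rw [← mul_star_eq_coe, ← mul_coe_eq_smul, ← self_add_star', mul_add, add_sub_cancel_right]
  have hscalar : (1 - t) • e = ((-(e * star e).re : R) : ℍ[R,c₁,c₂,c₃]) := by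
    rw [sub_smul, one_smul, coe_neg]
    nth_rw 1 [← he.eq, hquad]
    abel
  refine ⟨(↑u⁻¹ : R) * -(e * star e).re, ?_⟩
  rw [← smul_coe, ← hscalar, ← hu, smul_smul, Units.inv_mul, one_smul]

theorem eq_zero_or_one_of_isIdempotentElem [IsLocalRing R] (h2 : ¬IsUnit (2 : R))
    (hc₂ : ¬IsUnit c₂) {e : ℍ[R,c₁,c₂,c₃]} (he : IsIdempotentElem e) : e = 0 ∨ e = 1 := by
  have htr : 2 * e.re + c₂ * e.imI ∈ IsLocalRing.maximalIdeal R :=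
    add_mem (Ideal.mul_mem_right _ _ h2) (Ideal.mul_mem_right _ _ hc₂)
  obtain ⟨r, rfl⟩ :=
    exists_eq_coe_of_isIdempotentElem he (IsLocalRing.isUnit_one_sub_self_of_mem_nonunits _ htr)
  have hr : IsIdempotentElem r := coe_injective (by rw [coe_mul]; exact he)
  rcases IsLocalRing.eq_zero_or_one_of_isIdempotentElem hr with rfl | rfl
  · exact .inl coe_zero
  · exact .inr coe_one

end QuaternionAlgebra

theorem setOf_exists_prod_isIdempotentElem_eq_pair {M : Type*} [MonoidWithZero M]
    (h : ∀ e : M, IsIdempotentElem e → e = 0 ∨ e = 1) :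
    {z : M | ∃ l : List M, l ≠ [] ∧ (∀ e ∈ l, IsIdempotentElem e) ∧ z = l.prod} = {0, 1} := by
  ext z
  constructor
  · rintro ⟨l, -, hl, rfl⟩
    refine List.prod_induction (· ∈ ({0, 1} : Set M)) ?_ (.inr rfl) fun e he => h e (hl e he)
    rintro a b (rfl | rfl) (rfl | rfl) <;> simp
  · rintro (rfl | rfl)
    · exact ⟨[0], by simp, by simpa using IsIdempotentElem.zero, by simp⟩
    · exact ⟨[1], by simp, by simpa using IsIdempotentElem.one, by simp⟩

/-- For every positive integer `n`, exactly `2` elements of the quaternion ring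
`H(ℤ_{2^n})` can be written as a product of idempotents. -/
theorem card_products_of_idempotents_quaternion_zmod_two_pow (n : ℕ) (hn : 0 < n) :
    Set.ncard {z : ℍ[ZMod (2 ^ n)] | ∃ l : List ℍ[ZMod (2 ^ n)], l ≠ [] ∧
      (∀ e ∈ l, IsIdempotentElem e) ∧ z = l.prod} = 2 := by
  have := ZMod.isLocalRing_prime_pow Nat.prime_two hn.ne'
  have h2 : ¬IsUnit (2 : ZMod (2 ^ n)) :=
    IsNilpotent.not_isUnit ⟨n, by exact_mod_cast ZMod.natCast_self (2 ^ n)⟩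
  rw [setOf_exists_prod_isIdempotentElem_eq_pair (M := ℍ[ZMod (2 ^ n)]) fun e =>
    QuaternionAlgebra.eq_zero_or_one_of_isIdempotentElem h2 not_isUnit_zero]
  exact Set.ncard_pair zero_ne_one
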